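/- For a unitary U on an n-dimensional Hilbert space and a density matrix ρ with eigenvalue vector λ (ascending order λ↑, descending order λ↓), the trace distance satisfies T(ρ, UρU†) ≤ ½ Σᵢ |λᵢ↑ − λᵢ↓|. -/

import Mathlib

/-!
`X = ρ - UρU†` is Hermitian of trace zero, so `T(ρ, UρU†) = ½ Σ |xᵢ| = tr (P X)`, where the `xᵢ` are
the eigenvalues of `X` and `P` is its spectral projector onto the positive ones, of rank `k` say.
For `A = w diag(a) w†` and `P = u diag(c) u†` one has `tr (P A) = Σⱼ tⱼ aⱼ` with `t = c ᵥ* |u† w|²`;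
as `|u† w|²` is doubly stochastic, the weights `tⱼ` lie in `[0, 1]` and add up to `k`, so `tr (P A)`
lies between the sum of the `k` smallest and the sum of the `k` largest eigenvalues of `A` (Ky Fan).
Since `ρ` and `UρU†` have the same spectrum, `T ≤ Σ_{i<k} (λ↓ᵢ - λ↑ᵢ)`, and this is at most
`½ Σ |λ↑ᵢ - λ↓ᵢ|` because `λ↓ - λ↑` sums to zero.
-/

open Matrix Kronecker
open scoped ComplexOrder

/-- Trace distance `T(ρ,σ) = ½ Tr √((ρ−σ)†(ρ−σ))`. -/
noncomputable def traceDist {n : ℕ} (ρ σ : Matrix (Fin n) (Fin n) ℂ) : ℝ :=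
  (1/2) * ((Matrix.posSemidef_conjTranspose_mul_self (ρ - σ)).1.eigenvectorUnitary.1 *
    Matrix.diagonal ((fun x : ℝ => (x : ℂ)) ∘ (√·) ∘ (Matrix.posSemidef_conjTranspose_mul_self (ρ - σ)).1.eigenvalues) *
    (star (Matrix.posSemidef_conjTranspose_mul_self (ρ - σ)).1.eigenvectorUnitary :
      Matrix (Fin n) (Fin n) ℂ)).trace.re

theorem Finset.sum_abs_eq_two_mul_sum_posPart {ι : Type*} (s : Finset ι) {f : ι → ℝ}
    (hf : ∑ i ∈ s, f i = 0) : ∑ i ∈ s, |f i| = 2 * ∑ i ∈ s, (f i)⁺ := by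
  have hsplit : ∑ i ∈ s, (f i)⁺ - ∑ i ∈ s, (f i)⁻ = 0 := by
    rw [← Finset.sum_sub_distrib]; simpa only [posPart_sub_negPart] using hf
  rw [← Finset.sum_congr rfl fun i _ => posPart_add_negPart (f i), Finset.sum_add_distrib]
  linarith

theorem Finset.sum_le_half_sum_abs_of_sum_eq_zero {ι : Type*} [Fintype ι] (s : Finset ι)
    {f : ι → ℝ} (hf : ∑ i, f i = 0) : ∑ i ∈ s, f i ≤ (1 / 2) * ∑ i, |f i| := by
  rw [Finset.sum_abs_eq_two_mul_sum_posPart _ hf]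
  calc ∑ i ∈ s, f i ≤ ∑ i ∈ s, (f i)⁺ := Finset.sum_le_sum fun i _ => le_posPart (f i)
    _ ≤ ∑ i, (f i)⁺ := Finset.sum_le_sum_of_subset_of_nonneg (Finset.subset_univ s)
        fun i _ _ => posPart_nonneg (f i)
    _ = (1 / 2) * (2 * ∑ i, (f i)⁺) := by ring

theorem sum_mul_le_sum_val_lt_of_antitone {n : ℕ} {d t : Fin n → ℝ} (hd : Antitone d)
    (ht0 : ∀ i, 0 ≤ t i) (ht1 : ∀ i, t i ≤ 1) {k : ℕ} (htk : ∑ i, t i = k) :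
    ∑ i, t i * d i ≤ ∑ i with i.val < k, d i := by
  rcases n.eq_zero_or_pos with rfl | hn
  · simp
  have hkn : k ≤ n := by
    have := Finset.sum_le_sum fun i (_ : i ∈ Finset.univ) => ht1 i
    simp only [htk, Finset.sum_const, Finset.card_univ, Fintype.card_fin, nsmul_eq_mul,
      mul_one] at this
    exact_mod_cast this
  -- `θ` separates the `k` largest values of `d` from the others.
  set θ := d ⟨k - 1, by omega⟩
  set s : Fin n → ℝ := fun i => if i.val < k then 1 else 0
  have hs : ∑ i, s i = k := by
    simp [s, Finset.sum_boole, Fin.card_filter_val_lt, hkn]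
  have hpt : ∀ i, (t i - s i) * (d i - θ) ≤ 0 := by
    intro i
    by_cases hi : i.val < k
    · have : θ ≤ d i := hd (Fin.le_iff_val_le_val.2 (by dsimp only; omega))
      simp only [s, if_pos hi]
      exact mul_nonpos_of_nonpos_of_nonneg (by linarith [ht1 i]) (by linarith)
    · have : d i ≤ θ := hd (Fin.le_iff_val_le_val.2 (by dsimp only; omega))
      simp only [s, if_neg hi]
      exact mul_nonpos_of_nonneg_of_nonpos (by linarith [ht0 i]) (by linarith)
  calc ∑ i, t i * d i = ∑ i, s i * d i + ∑ i, (t i - s i) * (d i - θ) := by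
        simp only [sub_mul, mul_sub, Finset.sum_sub_distrib, ← Finset.sum_mul, hs, htk]
        ring
    _ ≤ ∑ i, s i * d i := add_le_of_nonpos_right (Finset.sum_nonpos fun i _ => hpt i)
    _ = ∑ i with i.val < k, d i := by simp [s, Finset.sum_filter]

namespace Matrix

section

variable {n 𝕜 : Type*} [Fintype n] [DecidableEq n] [RCLike 𝕜]

theorem norm_sq_mem_doublyStochastic_of_mem_unitaryGroup {N : Matrix n n 𝕜}
    (hN : N ∈ unitaryGroup n 𝕜) : of (fun i j => ‖N i j‖ ^ 2) ∈ doublyStochastic ℝ n := by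
  refine mem_doublyStochastic_iff_sum.2 ⟨fun i j => sq_nonneg _, fun i => ?_, fun j => ?_⟩
  · have := congrFun (congrFun (mem_unitaryGroup_iff.1 hN) i) i
    simp only [mul_apply, star_apply, ← starRingEnd_apply, RCLike.mul_conj, one_apply_eq] at this
    simpa using (by exact_mod_cast this : ∑ j, ‖N i j‖ ^ 2 = (1 : ℝ))
  · have := congrFun (congrFun (mem_unitaryGroup_iff'.1 hN) j) j
    simp only [mul_apply, star_apply, ← starRingEnd_apply, RCLike.conj_mul, one_apply_eq] at this
    simpa using (by exact_mod_cast this : ∑ i, ‖N i j‖ ^ 2 = (1 : ℝ))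

theorem trace_conj_diagonal_mul_conj_diagonal (u w : Matrix n n 𝕜) (c d : n → ℝ) :
    (u * diagonal (RCLike.ofReal ∘ c) * star u *
      (w * diagonal (RCLike.ofReal ∘ d) * star w)).trace
      = (((c ᵥ* of fun i j => ‖(star u * w) i j‖ ^ 2) ⬝ᵥ d : ℝ) : 𝕜) := by
  set N := star u * w
  have hcyc : (u * diagonal (RCLike.ofReal ∘ c) * star u *
      (w * diagonal (RCLike.ofReal ∘ d) * star w)).trace
      = (diagonal (RCLike.ofReal ∘ c) * N * diagonal (RCLike.ofReal ∘ d) * star N).trace := by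
    simp only [Matrix.mul_assoc]
    rw [trace_mul_comm]
    simp only [N, star_mul, star_star, Matrix.mul_assoc]
  rw [hcyc]
  simp only [trace, diag_apply, mul_apply, diagonal_apply, mul_ite, ite_mul, mul_zero, zero_mul,
    Finset.sum_ite_eq, Finset.sum_ite_eq', Finset.mem_univ, if_true, star_apply, dotProduct, vecMul,
    of_apply]
  push_cast
  rw [Finset.sum_comm]
  refine Finset.sum_congr rfl fun j _ => ?_
  rw [Finset.sum_mul]
  refine Finset.sum_congr rfl fun i _ => ?_
  rw [← RCLike.mul_conj]
  simp only [Function.comp_apply, starRingEnd_apply]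
  ring

theorem IsHermitian.trace_cfc {A : Matrix n n 𝕜} (hA : A.IsHermitian) (f : ℝ → ℝ) :
    (cfc f A).trace = ∑ i, (f (hA.eigenvalues i) : 𝕜) := by
  rw [hA.cfc_eq, IsHermitian.cfc, Unitary.conjStarAlgAut_apply, trace_mul_cycle,
    Unitary.coe_star_mul_self, one_mul, trace_diagonal]
  rfl

theorem IsHermitian.re_trace_cfc_pos_mul_self {A : Matrix n n 𝕜} (hA : A.IsHermitian) :
    RCLike.re (hA.cfc (fun x => if 0 < x then 1 else 0) * A).trace
      = ∑ i, (hA.eigenvalues i)⁺ := by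
  have hcont (f : ℝ → ℝ) : ContinuousOn f (spectrum ℝ A) := A.finite_real_spectrum.continuousOn f
  have hmul : cfc (fun x : ℝ => if 0 < x then (1 : ℝ) else 0) A * A
      = cfc (fun x : ℝ => (if 0 < x then (1 : ℝ) else 0) * x) A := by
    rw [cfc_mul _ _ A (hcont _) (hcont _), cfc_id' ℝ A]
  rw [← hA.cfc_eq, hmul, hA.trace_cfc, map_sum]
  refine Finset.sum_congr rfl fun i _ => ?_
  rw [RCLike.ofReal_re]
  split_ifs with h
  · rw [one_mul, posPart_eq_self.2 h.le]
  · rw [zero_mul, posPart_eq_zero.2 (not_lt.1 h)]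

theorem IsHermitian.exists_mem_unitaryGroup_eq_conj_diagonal_comp {A : Matrix n n 𝕜}
    (hA : A.IsHermitian) (e : Equiv.Perm n) :
    ∃ w ∈ unitaryGroup n 𝕜,
      A = w * diagonal (RCLike.ofReal ∘ hA.eigenvalues ∘ e) * star w := by
  set v : Matrix n n 𝕜 := hA.eigenvectorUnitary.1
  have hv : star v * v = 1 := mem_unitaryGroup_iff'.1 hA.eigenvectorUnitary.2
  refine ⟨v.submatrix id e, mem_unitaryGroup_iff'.2 ?_, ?_⟩
  · rw [star_eq_conjTranspose, conjTranspose_submatrix, ← star_eq_conjTranspose,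
      ← submatrix_mul _ _ _ _ _ Function.bijective_id, hv, submatrix_one_equiv]
  · rw [star_eq_conjTranspose, conjTranspose_submatrix, ← star_eq_conjTranspose,
      ← Function.comp_assoc, ← submatrix_diagonal_equiv, submatrix_mul_equiv, submatrix_mul_equiv,
      submatrix_id_id]
    exact hA.spectral_theorem

theorem IsHermitian.exists_re_trace_conj_diagonal_mul_eq_half_sum_abs {A : Matrix n n 𝕜}
    (hA : A.IsHermitian) (htr : A.trace = 0) :
    ∃ u ∈ unitaryGroup n 𝕜, ∃ c : n → ℝ, (∀ i, 0 ≤ c i) ∧ (∀ i, c i ≤ 1) ∧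
      (∃ k : ℕ, ∑ i, c i = k) ∧
      RCLike.re (u * diagonal (RCLike.ofReal ∘ c) * star u * A).trace
        = (1/2) * ∑ i, |hA.eigenvalues i| := by
  have hsum : ∑ i, hA.eigenvalues i = 0 := by
    rwa [hA.trace_eq_sum_eigenvalues, ← RCLike.ofReal_sum, RCLike.ofReal_eq_zero] at htr
  refine ⟨_, hA.eigenvectorUnitary.2, fun i => if 0 < hA.eigenvalues i then 1 else 0,
    fun i => by dsimp only; split_ifs <;> norm_num, fun i => by dsimp only; split_ifs <;> norm_num,
    ⟨_, Finset.sum_boole _ _⟩, ?_⟩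
  rw [Finset.sum_abs_eq_two_mul_sum_posPart _ hsum, ← mul_assoc, one_div_mul_cancel two_ne_zero,
    one_mul, ← hA.re_trace_cfc_pos_mul_self]
  rfl

end

variable {𝕜 : Type*} [RCLike 𝕜] {n : ℕ}

theorem re_trace_conj_diagonal_mul_le_sum_val_lt {u w : Matrix (Fin n) (Fin n) 𝕜}
    (hu : u ∈ unitaryGroup (Fin n) 𝕜) (hw : w ∈ unitaryGroup (Fin n) 𝕜) {c d : Fin n → ℝ}
    (hc0 : ∀ i, 0 ≤ c i) (hc1 : ∀ i, c i ≤ 1) {k : ℕ} (hck : ∑ i, c i = k) (hd : Antitone d) :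
    RCLike.re (u * diagonal (RCLike.ofReal ∘ c) * star u *
      (w * diagonal (RCLike.ofReal ∘ d) * star w)).trace ≤ ∑ i with i.val < k, d i := by
  set M := of fun i j => ‖(star u * w) i j‖ ^ 2
  have hM : M ∈ doublyStochastic ℝ (Fin n) :=
    norm_sq_mem_doublyStochastic_of_mem_unitaryGroup (mul_mem (Unitary.star_mem hu) hw)
  rw [trace_conj_diagonal_mul_conj_diagonal, RCLike.ofReal_re]
  refine sum_mul_le_sum_val_lt_of_antitone hd (fun j => ?_) (fun j => ?_) ?_
  · simp only [vecMul, dotProduct]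
    exact Finset.sum_nonneg fun i _ => mul_nonneg (hc0 i) (nonneg_of_mem_doublyStochastic hM)
  · calc (c ᵥ* M) j = ∑ i, c i * M i j := rfl
      _ ≤ ∑ i, M i j := Finset.sum_le_sum fun i _ =>
          mul_le_of_le_one_left (nonneg_of_mem_doublyStochastic hM) (hc1 i)
      _ = 1 := sum_col_of_mem_doublyStochastic hM j
  · rw [← hck, ← mulVec_transpose]
    exact sum_mulVec_of_mem_doublyStochastic (transpose_mem_doublyStochastic_iff.2 hM)

theorem sum_val_lt_le_re_trace_conj_diagonal_mul {u w : Matrix (Fin n) (Fin n) 𝕜}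
    (hu : u ∈ unitaryGroup (Fin n) 𝕜) (hw : w ∈ unitaryGroup (Fin n) 𝕜) {c d : Fin n → ℝ}
    (hc0 : ∀ i, 0 ≤ c i) (hc1 : ∀ i, c i ≤ 1) {k : ℕ} (hck : ∑ i, c i = k) (hd : Monotone d) :
    ∑ i with i.val < k, d i ≤ RCLike.re (u * diagonal (RCLike.ofReal ∘ c) * star u *
      (w * diagonal (RCLike.ofReal ∘ d) * star w)).trace := by
  have := re_trace_conj_diagonal_mul_le_sum_val_lt hu hw hc0 hc1 hck (d := -d) hd.neg
  have hneg : diagonal (RCLike.ofReal ∘ (-d)) = -diagonal (RCLike.ofReal ∘ d : Fin n → 𝕜) := by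
    ext i j; by_cases h : i = j <;> simp [h]
  rw [hneg, Matrix.mul_neg, Matrix.neg_mul, Matrix.mul_neg, trace_neg, map_neg] at this
  simp only [Pi.neg_apply, Finset.sum_neg_distrib] at this
  exact neg_le_neg_iff.1 this

theorem IsHermitian.re_trace_conj_diagonal_mul_sub_conj_le {A U u : Matrix (Fin n) (Fin n) 𝕜}
    (hA : A.IsHermitian) (hU : U ∈ unitaryGroup (Fin n) 𝕜) (hu : u ∈ unitaryGroup (Fin n) 𝕜)
    {c : Fin n → ℝ} (hc0 : ∀ i, 0 ≤ c i) (hc1 : ∀ i, c i ≤ 1) {k : ℕ} (hck : ∑ i, c i = k)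
    {ea ed : Equiv.Perm (Fin n)} (ha : Monotone (hA.eigenvalues ∘ ea))
    (hd : Antitone (hA.eigenvalues ∘ ed)) :
    RCLike.re (u * diagonal (RCLike.ofReal ∘ c) * star u * (A - U * A * star U)).trace
      ≤ ∑ i with i.val < k, ((hA.eigenvalues ∘ ed) i - (hA.eigenvalues ∘ ea) i) := by
  obtain ⟨wd, hwd, hAd⟩ := hA.exists_mem_unitaryGroup_eq_conj_diagonal_comp ed
  obtain ⟨wa, hwa, hAa⟩ := hA.exists_mem_unitaryGroup_eq_conj_diagonal_comp ea
  have hUAU : U * A * star U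
      = U * wa * diagonal (RCLike.ofReal ∘ hA.eigenvalues ∘ ea) * star (U * wa) := by
    conv_lhs => rw [hAa]
    simp only [star_mul, Matrix.mul_assoc]
  have hupper := re_trace_conj_diagonal_mul_le_sum_val_lt hu hwd hc0 hc1 hck hd
  have hlower := sum_val_lt_le_re_trace_conj_diagonal_mul hu (mul_mem hU hwa) hc0 hc1 hck ha
  rw [← hAd] at hupper
  rw [← hUAU] at hlower
  rw [Matrix.mul_sub, trace_sub, map_sub, Finset.sum_sub_distrib]
  exact sub_le_sub hupper hlower

end Matrix

section

open scoped MatrixOrder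

theorem traceDist_eq_re_trace_abs {n : ℕ} (ρ σ : Matrix (Fin n) (Fin n) ℂ) :
    traceDist ρ σ = (1/2) * (CFC.abs (ρ - σ)).trace.re := by
  have hA : (star (ρ - σ) * (ρ - σ)).PosSemidef := Matrix.posSemidef_conjTranspose_mul_self _
  rw [traceDist, CFC.abs, CFC.sqrt_eq_real_sqrt _ hA.nonneg, cfcₙ_eq_cfc, hA.1.cfc_eq]
  rfl

theorem traceDist_eq_sum_abs_eigenvalues {n : ℕ} {ρ σ : Matrix (Fin n) (Fin n) ℂ}
    (h : (ρ - σ).IsHermitian) : traceDist ρ σ = (1/2) * ∑ i, |h.eigenvalues i| := by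
  rw [traceDist_eq_re_trace_abs, CFC.abs_eq_cfc_norm _ h.isSelfAdjoint, h.trace_cfc]
  simp

end

theorem stmt_2_general {n : ℕ} (ρ : Matrix (Fin n) (Fin n) ℂ)
    (hρ : ρ.PosSemidef)
    (U : Matrix (Fin n) (Fin n) ℂ) (hU : U ∈ Matrix.unitaryGroup (Fin n) ℂ)
    (lamAsc lamDesc : Fin n → ℝ)
    (hAsc : Monotone lamAsc) (hDesc : Antitone lamDesc)
    (hAsc' : ∃ e : Equiv.Perm (Fin n), lamAsc = hρ.1.eigenvalues ∘ e)
    (hDesc' : ∃ e : Equiv.Perm (Fin n), lamDesc = hρ.1.eigenvalues ∘ e) :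
    traceDist ρ (U * ρ * Uᴴ) ≤ (1/2) * ∑ i, |lamAsc i - lamDesc i| := by
  obtain ⟨ea, rfl⟩ := hAsc'
  obtain ⟨ed, rfl⟩ := hDesc'
  have hX : (ρ - U * ρ * Uᴴ).IsHermitian := hρ.1.sub (isHermitian_mul_mul_conjTranspose U hρ.1)
  have htr : (ρ - U * ρ * Uᴴ).trace = 0 := by
    rw [trace_sub, trace_mul_cycle, ← star_eq_conjTranspose, mem_unitaryGroup_iff'.1 hU, one_mul,
      sub_self]
  obtain ⟨u, hu, c, hc0, hc1, ⟨k, hck⟩, hP⟩ :=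
    hX.exists_re_trace_conj_diagonal_mul_eq_half_sum_abs htr
  have hsum : ∑ i, ((hρ.1.eigenvalues ∘ ed) i - (hρ.1.eigenvalues ∘ ea) i) = 0 := by
    simp only [Finset.sum_sub_distrib, Function.comp_apply, Equiv.sum_comp, sub_self]
  calc traceDist ρ (U * ρ * Uᴴ)
      = RCLike.re (u * diagonal (RCLike.ofReal ∘ c) * star u * (ρ - U * ρ * Uᴴ)).trace := by
        rw [traceDist_eq_sum_abs_eigenvalues hX, hP]
    _ ≤ ∑ i with i.val < k, ((hρ.1.eigenvalues ∘ ed) i - (hρ.1.eigenvalues ∘ ea) i) :=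
      hρ.1.re_trace_conj_diagonal_mul_sub_conj_le hU hu hc0 hc1 hck hAsc hDesc
    _ ≤ (1/2) * ∑ i, |(hρ.1.eigenvalues ∘ ed) i - (hρ.1.eigenvalues ∘ ea) i| :=
      Finset.sum_le_half_sum_abs_of_sum_eq_zero _ hsum
    _ = (1/2) * ∑ i, |(hρ.1.eigenvalues ∘ ea) i - (hρ.1.eigenvalues ∘ ed) i| := by
      simp_rw [abs_sub_comm]

/-- For a unitary U and a density matrix ρ,
T(ρ, UρU†) ≤ ½ Σᵢ |λᵢ↑ − λᵢ↓|. -/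
theorem stmt_2 {n : ℕ} (ρ : Matrix (Fin n) (Fin n) ℂ)
    (hρ : ρ.PosSemidef) (hρt : ρ.trace = 1)
    (U : Matrix (Fin n) (Fin n) ℂ) (hU : U ∈ Matrix.unitaryGroup (Fin n) ℂ)
    (lamAsc lamDesc : Fin n → ℝ)
    (hAsc : Monotone lamAsc) (hDesc : Antitone lamDesc)
    (hAsc' : ∃ e : Equiv.Perm (Fin n), lamAsc = hρ.1.eigenvalues ∘ e)
    (hDesc' : ∃ e : Equiv.Perm (Fin n), lamDesc = hρ.1.eigenvalues ∘ e) :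
    traceDist ρ (U * ρ * Uᴴ) ≤ (1/2) * ∑ i, |lamAsc i - lamDesc i| :=
  stmt_2_general ρ hρ U hU lamAsc lamDesc hAsc hDesc hAsc' hDesc'
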